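/- Let V ⊆ ℝⁿ be a nontrivial subspace. Then MinSupp(V) ∩ S₁^{n-1} = Ext(V ∩ B₁ⁿ): the vectors of minimal support in V with unit ℓ₁-norm are exactly the extreme points of the intersection of V with the closed unit ℓ₁-ball. -/

import Mathlib

/-!
Let `σ = sign x` be the sign vector of `x`, so that `σ ⬝ᵥ z ≤ ‖z‖₁` with equality at `z = x`
and equality only if `supp z ⊆ supp x`. If `x` has minimal support and `‖x‖₁ = 1`, then every
segment of `V ∩ B₁ⁿ` through `x` lies in the face `σ ⬝ᵥ z = 1`, hence consists of vectors
supported in `supp x`, i.e. of multiples of `x`, and the face condition pins the multiple to `1`.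
Conversely, near `x` the ℓ₁ norm is affine along directions `w` supported in `supp x`, so if
`σ ⬝ᵥ w = 0` then `x ± t w` stay on the unit sphere for small `t`; extremality forces `w = 0`,
which shows that every `v ∈ V` supported in `supp x` is a multiple of `x`.
-/

/-- The ℓ₁ norm of a vector in ℝⁿ. -/
noncomputable def l1 {n : ℕ} (x : Fin n → ℝ) : ℝ := ∑ i, |x i|

/-- The set of vectors of minimal support in a subspace `V ⊆ ℝⁿ`: the nonzero `x ∈ V`
such that no nonzero `y ∈ V` has support strictly contained in the support of `x`. -/
def MinSupp {n : ℕ} (V : Submodule ℝ (Fin n → ℝ)) : Set (Fin n → ℝ) :=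
  {x | x ∈ V ∧ x ≠ 0 ∧
    ¬∃ y : Fin n → ℝ, y ∈ V ∧ y ≠ 0 ∧ Function.support y ⊂ Function.support x}

open Filter Topology

noncomputable def signVec {n : ℕ} (x : Fin n → ℝ) : Fin n → ℝ := fun i => (SignType.sign (x i) : ℝ)

section L1

variable {n : ℕ}

lemma l1_pos {x : Fin n → ℝ} (hx : x ≠ 0) : 0 < l1 x := by
  obtain ⟨i, hi⟩ := Function.ne_iff.mp hx
  exact Finset.sum_pos' (fun j _ => abs_nonneg _) ⟨i, Finset.mem_univ i, abs_pos.mpr hi⟩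

lemma l1_smul (c : ℝ) (x : Fin n → ℝ) : l1 (c • x) = |c| * l1 x := by
  simp [l1, abs_mul, Finset.mul_sum]

lemma l1_neg (x : Fin n → ℝ) : l1 (-x) = l1 x := by
  simp [l1]

lemma sign_mul_le_abs (a b : ℝ) : (SignType.sign a : ℝ) * b ≤ |b| := by
  rcases lt_trichotomy a 0 with h | h | h <;> simp [h, neg_le_abs, le_abs_self]

lemma signVec_dotProduct_self (x : Fin n → ℝ) : signVec x ⬝ᵥ x = l1 x :=
  Finset.sum_congr rfl fun i _ => sign_mul_self (x i)

lemma signVec_dotProduct_le_l1 (x z : Fin n → ℝ) : signVec x ⬝ᵥ z ≤ l1 z :=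
  Finset.sum_le_sum fun _ _ => sign_mul_le_abs _ _

lemma support_subset_of_l1_le_signVec_dotProduct {x z : Fin n → ℝ}
    (h : l1 z ≤ signVec x ⬝ᵥ z) : Function.support z ⊆ Function.support x := by
  intro i hzi
  by_contra hxi
  have hlt : signVec x ⬝ᵥ z < l1 z :=
    Finset.sum_lt_sum (fun j _ => sign_mul_le_abs _ _)
      ⟨i, Finset.mem_univ i, by simpa [signVec, Function.notMem_support.1 hxi] using hzi⟩
  exact hlt.not_ge h

lemma signVec_dotProduct_eq_one_of_mem_openSegment {x x₁ x₂ : Fin n → ℝ} (hx : l1 x = 1)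
    (h₁ : l1 x₁ ≤ 1) (h₂ : l1 x₂ ≤ 1) (hseg : x ∈ openSegment ℝ x₁ x₂) :
    signVec x ⬝ᵥ x₁ = 1 := by
  obtain ⟨a, b, ha, hb, hab, hxab⟩ := hseg
  have hsum : a * (signVec x ⬝ᵥ x₁) + b * (signVec x ⬝ᵥ x₂) = 1 :=
    calc a * (signVec x ⬝ᵥ x₁) + b * (signVec x ⬝ᵥ x₂) = signVec x ⬝ᵥ (a • x₁ + b • x₂) := by
          rw [dotProduct_add, dotProduct_smul, dotProduct_smul, smul_eq_mul, smul_eq_mul]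
      _ = 1 := by rw [hxab, signVec_dotProduct_self, hx]
  have hle₁ := signVec_dotProduct_le_l1 x x₁
  have hle₂ := signVec_dotProduct_le_l1 x x₂
  nlinarith

lemma eventually_abs_add_mul {a b : ℝ} (h : a = 0 → b = 0) :
    ∀ᶠ t in 𝓝 (0 : ℝ), |a + t * b| = |a| + t * ((SignType.sign a : ℝ) * b) := by
  rcases eq_or_ne a 0 with rfl | ha
  · simp [h rfl]
  have hc : ContinuousAt (fun t : ℝ => SignType.sign (a + t * b)) 0 :=
    (continuousAt_sign_of_ne_zero (by simpa using ha)).comp (by fun_prop)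
  have hsign : ∀ᶠ t in 𝓝 (0 : ℝ), SignType.sign (a + t * b) = SignType.sign a := by
    simpa [nhds_discrete, tendsto_pure] using hc.tendsto
  filter_upwards [hsign] with t ht
  rw [← sign_mul_self (a + t * b), ht, ← sign_mul_self a]
  ring

lemma eventually_l1_add_smul {x v : Fin n → ℝ} (hv : Function.support v ⊆ Function.support x) :
    ∀ᶠ t in 𝓝 (0 : ℝ), l1 (x + t • v) = l1 x + t * (signVec x ⬝ᵥ v) := by
  have hcoord := eventually_all.2 fun i =>
    eventually_abs_add_mul (a := x i) (b := v i) fun hxi => by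
      by_contra hvi
      exact hv hvi hxi
  filter_upwards [hcoord] with t ht
  simp only [l1, dotProduct, signVec, Pi.add_apply, Pi.smul_apply, smul_eq_mul, ht,
    Finset.sum_add_distrib, Finset.mul_sum]

end L1

section Subspace

variable {n : ℕ} {V : Submodule ℝ (Fin n → ℝ)}

lemma mem_MinSupp_iff {x : Fin n → ℝ} :
    x ∈ MinSupp V ↔ x ∈ V ∧ x ≠ 0 ∧
      ∀ v ∈ V, Function.support v ⊆ Function.support x → ∃ c : ℝ, v = c • x := by
  constructor
  · rintro ⟨hxV, hx0, hmin⟩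
    refine ⟨hxV, hx0, fun v hv hs => ?_⟩
    obtain ⟨i, hi⟩ := Function.ne_iff.mp hx0
    refine ⟨v i / x i, sub_eq_zero.1 (by_contra fun hw => hmin ⟨_, ?_, hw, ?_⟩)⟩
    · exact V.sub_mem hv (V.smul_mem _ hxV)
    · have hsub : Function.support (v - (v i / x i) • x) ⊆ Function.support x :=
        (Function.support_sub _ _).trans
          (Set.union_subset hs (Function.support_const_smul_subset _ _))
      refine (Set.ssubset_iff_of_subset hsub).2 ⟨i, hi, ?_⟩
      simp [Function.mem_support, div_mul_cancel₀ _ hi]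
  · rintro ⟨hxV, hx0, hscalar⟩
    refine ⟨hxV, hx0, fun ⟨y, hyV, hy0, hss⟩ => ?_⟩
    obtain ⟨c, rfl⟩ := hscalar y hyV hss.subset
    have hc : c ≠ 0 := by
      rintro rfl
      exact hy0 (zero_smul _ _)
    exact hss.ne (Function.support_const_smul_of_ne_zero c x hc)

lemma ne_zero_of_mem_extremePoints (hV : V ≠ ⊥) {x : Fin n → ℝ}
    (hx : x ∈ Set.extremePoints ℝ ((V : Set (Fin n → ℝ)) ∩ {x | l1 x ≤ 1})) : x ≠ 0 := by
  rintro rfl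
  obtain ⟨v, hvV, hv0⟩ := Submodule.exists_mem_ne_zero_of_ne_bot hV
  have hpos := l1_pos hv0
  set u := (l1 v)⁻¹ • v
  have hu : l1 u = 1 := by
    rw [l1_smul, abs_of_pos (inv_pos.2 hpos), inv_mul_cancel₀ hpos.ne']
  have h0 : (0 : Fin n → ℝ) ∈ openSegment ℝ u (-u) :=
    ⟨1 / 2, 1 / 2, by norm_num, by norm_num, by norm_num, by module⟩
  have hu0 := (mem_extremePoints_iff_left.1 hx).2 u ⟨V.smul_mem _ hvV, hu.le⟩ (-u)
    ⟨V.neg_mem (V.smul_mem _ hvV), show l1 (-u) ≤ 1 by rw [l1_neg, hu]⟩ h0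
  exact smul_ne_zero (inv_ne_zero hpos.ne') hv0 hu0

lemma l1_eq_one_of_mem_extremePoints {x : Fin n → ℝ} (hx0 : x ≠ 0)
    (hx : x ∈ Set.extremePoints ℝ ((V : Set (Fin n → ℝ)) ∩ {x | l1 x ≤ 1})) : l1 x = 1 := by
  obtain ⟨⟨hxV, hx1⟩, hext⟩ := mem_extremePoints_iff_left.1 hx
  refine hx1.antisymm (not_lt.1 fun hlt => hx0 ?_)
  have hpos := l1_pos hx0
  have hseg : x ∈ openSegment ℝ 0 ((l1 x)⁻¹ • x) :=
    ⟨1 - l1 x, l1 x, by linarith, hpos, by ring, by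
      rw [smul_zero, zero_add, smul_smul, mul_inv_cancel₀ hpos.ne', one_smul]⟩
  refine (hext 0 ⟨V.zero_mem, by simp [l1]⟩ _ ⟨V.smul_mem _ hxV, show l1 _ ≤ 1 from ?_⟩ hseg).symm
  rw [l1_smul, abs_of_pos (inv_pos.2 hpos), inv_mul_cancel₀ hpos.ne']

lemma eq_smul_of_mem_extremePoints {x v : Fin n → ℝ}
    (hx : x ∈ Set.extremePoints ℝ ((V : Set (Fin n → ℝ)) ∩ {x | l1 x ≤ 1})) (hx1 : l1 x = 1)
    (hv : v ∈ V) (hs : Function.support v ⊆ Function.support x) :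
    v = (signVec x ⬝ᵥ v) • x := by
  obtain ⟨⟨hxV, -⟩, hext⟩ := mem_extremePoints_iff_left.1 hx
  set w := v - (signVec x ⬝ᵥ v) • x
  have hwV : w ∈ V := V.sub_mem hv (V.smul_mem _ hxV)
  have hws : Function.support w ⊆ Function.support x :=
    (Function.support_sub _ _).trans (Set.union_subset hs (Function.support_const_smul_subset _ _))
  have hw : signVec x ⬝ᵥ w = 0 := by
    simp [w, dotProduct_sub, dotProduct_smul, signVec_dotProduct_self, hx1]
  have hsphere : ∀ᶠ t in 𝓝 (0 : ℝ), l1 (x + t • w) = 1 := by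
    simpa [hw, hx1] using eventually_l1_add_smul hws
  have hsphere' := hsphere.and ((continuous_neg.tendsto' 0 0 neg_zero).eventually hsphere)
  obtain ⟨t, ⟨h₁, h₂⟩, ht⟩ :=
    ((hsphere'.filter_mono nhdsWithin_le_nhds).and
      (self_mem_nhdsWithin : {0}ᶜ ∈ 𝓝[≠] (0 : ℝ))).exists
  have hseg : x ∈ openSegment ℝ (x + t • w) (x + (-t) • w) :=
    ⟨1 / 2, 1 / 2, by norm_num, by norm_num, by norm_num, by module⟩
  have htw : x + t • w = x :=
    hext _ ⟨V.add_mem hxV (V.smul_mem _ hwV), h₁.le⟩ _ ⟨V.add_mem hxV (V.smul_mem _ hwV), h₂.le⟩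
      hseg
  rw [← sub_eq_zero]
  exact (smul_eq_zero.1 (add_eq_left.1 htw)).resolve_left ht

end Subspace

/-- Let `V ⊆ ℝⁿ` be a nontrivial subspace.  Then
`MinSupp(V) ∩ S₁^{n-1} = Ext(V ∩ B₁ⁿ)`: the unit-ℓ₁-norm vectors of minimal support in `V`
are exactly the extreme points of `V ∩ B₁ⁿ`. -/
theorem stmt7 {n : ℕ} (V : Submodule ℝ (Fin n → ℝ)) (hV : V ≠ ⊥) :
    MinSupp V ∩ {x | l1 x = 1}
      = Set.extremePoints ℝ ((V : Set (Fin n → ℝ)) ∩ {x | l1 x ≤ 1}) := by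
  ext x
  constructor
  · rintro ⟨hms, hx1⟩
    obtain ⟨hxV, -, hscalar⟩ := mem_MinSupp_iff.1 hms
    refine mem_extremePoints_iff_left.2 ⟨⟨hxV, hx1.le⟩, ?_⟩
    rintro x₁ ⟨h₁V, h₁⟩ x₂ ⟨-, h₂⟩ hseg
    have hface := signVec_dotProduct_eq_one_of_mem_openSegment hx1 h₁ h₂ hseg
    obtain ⟨c, rfl⟩ :=
      hscalar x₁ h₁V (support_subset_of_l1_le_signVec_dotProduct (h₁.trans hface.ge))
    rw [dotProduct_smul, signVec_dotProduct_self, hx1, smul_eq_mul, mul_one] at hface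
    rw [hface, one_smul]
  · intro hx
    have hx0 := ne_zero_of_mem_extremePoints hV hx
    have hx1 := l1_eq_one_of_mem_extremePoints hx0 hx
    exact ⟨mem_MinSupp_iff.2 ⟨hx.1.1, hx0, fun v hv hs =>
      ⟨_, eq_smul_of_mem_extremePoints hx hx1 hv hs⟩⟩, hx1⟩
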